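/- arXiv:0908.2609 — 5 statements merged into one kernel-verified Lean document; each statement's English description precedes it below -/
import Mathlib

section
/- Worpitzky's identity: for every positive integer k and every integer (or indeterminate) z, z^k equals the sum over i from 0 to k-1 of the Eulerian number A(k, i) times the binomial coefficient C(z + i, k). -/
/-- Eulerian numbers: `eulerian n k` is the number of permutations of
`{1, ..., n}` with exactly `k` ascents. -/
def eulerian : ℕ → ℕ → ℕ
  | 0, 0 => 1
  | 0, _ + 1 => 0
  | n + 1, 0 => eulerian n 0
  | n + 1, k + 1 => (k + 2) * eulerian n (k + 1) + (n - k) * eulerian n k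

lemma choose_key (n k : ℕ) :
    (k + 1) * n.choose (k + 1) + k * n.choose k = n * n.choose k := by
  rcases le_or_gt k n with h | h
  · have h1 : (k + 1) * n.choose (k + 1) = n.choose k * (n - k) := by
      rw [mul_comm]; exact Nat.choose_succ_right_eq n k
    have h2 : n - k + k = n := Nat.sub_add_cancel h
    rw [h1, mul_comm k, mul_comm n, ← Nat.mul_add, h2]
  · rw [Nat.choose_eq_zero_of_lt h, Nat.choose_eq_zero_of_lt (by omega)]
    simp

lemma eulerian_zero_of_le : ∀ n k : ℕ, 0 < n → n ≤ k → eulerian n k = 0 := by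
  intro n
  induction n with
  | zero => intro k h; omega
  | succ m ih =>
    intro k _ hk
    obtain ⟨j, rfl⟩ : ∃ j, k = j + 1 := ⟨k - 1, by omega⟩
    have hmj : m ≤ j := by omega
    have h1 : eulerian m (j + 1) = 0 := by
      rcases Nat.eq_zero_or_pos m with hm | hm
      · subst hm; rfl
      · exact ih _ hm (by omega)
    have h2 : m - j = 0 := by omega
    show (j + 2) * eulerian m (j + 1) + (m - j) * eulerian m j = 0
    rw [h1, h2]; simp

lemma worpitzkyZ (k : ℕ) (hk : 1 ≤ k) (z : ℕ) :
    (z : ℤ) ^ k = ∑ i ∈ Finset.range k, (eulerian k i : ℤ) * ((z + i).choose k : ℤ) := by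
  induction k, hk using Nat.le_induction with
  | base =>
    simp [eulerian, Nat.choose_one_right]
  | succ k hk ih =>
    have step1 : (z : ℤ) ^ (k + 1) =
        ∑ i ∈ Finset.range k, ((eulerian k i : ℤ) * ((i + 1) * ((z + i).choose (k + 1) : ℤ))
          + (eulerian k i : ℤ) * (((k : ℤ) - i) * ((z + (i + 1)).choose (k + 1) : ℤ))) := by
      rw [pow_succ, ih, Finset.sum_mul]
      refine Finset.sum_congr rfl ?_
      intro i hi
      have hik : i < k := Finset.mem_range.mp hi
      have hA : ((k : ℤ) + 1) * ((z + i).choose (k + 1) : ℤ) + (k : ℤ) * ((z + i).choose k : ℤ)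
          = ((z : ℤ) + i) * ((z + i).choose k : ℤ) := by
        exact_mod_cast choose_key (z + i) k
      have hP : (((z + (i + 1)).choose (k + 1) : ℕ) : ℤ)
          = ((z + i).choose k : ℤ) + ((z + i).choose (k + 1) : ℤ) := by
        have : (z + (i + 1)).choose (k + 1) = (z + i).choose k + (z + i).choose (k + 1) :=
          Nat.choose_succ_succ (z + i) k
        push_cast [this]
        ring
      linear_combination (-(eulerian k i : ℤ)) * hA + (-(((k : ℤ) - i) * (eulerian k i : ℤ))) * hP
    rw [step1, Finset.sum_add_distrib]
    have hAkk : eulerian k k = 0 := eulerian_zero_of_le k k hk le_rfl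
    have S1ext : (∑ i ∈ Finset.range k,
          (eulerian k i : ℤ) * ((i + 1) * ((z + i).choose (k + 1) : ℤ)))
        = ∑ i ∈ Finset.range (k + 1),
          (eulerian k i : ℤ) * ((i + 1) * ((z + i).choose (k + 1) : ℤ)) := by
      rw [Finset.sum_range_succ, hAkk]
      simp
    rw [S1ext, Finset.sum_range_succ' (fun i => (eulerian k i : ℤ) * ((i + 1) * ((z + i).choose (k + 1) : ℤ))) k]
    rw [Finset.sum_range_succ' (fun i => (eulerian (k + 1) i : ℤ) * ((z + i).choose (k + 1) : ℤ)) k]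
    have h0 : eulerian (k + 1) 0 = eulerian k 0 := rfl
    rw [h0]
    rw [add_right_comm, ← Finset.sum_add_distrib]
    congr 1
    · refine Finset.sum_congr rfl ?_
      intro i hi
      have hik : i < k := Finset.mem_range.mp hi
      have hrec : eulerian (k + 1) (i + 1) = (i + 2) * eulerian k (i + 1) + (k - i) * eulerian k i := rfl
      have hcast : ((eulerian (k + 1) (i + 1) : ℕ) : ℤ)
          = ((i : ℤ) + 2) * (eulerian k (i + 1) : ℤ) + ((k : ℤ) - i) * (eulerian k i : ℤ) := by
        rw [hrec]
        push_cast [Nat.cast_sub (le_of_lt hik)]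
        ring
      rw [hcast]
      push_cast
      ring
    · push_cast
      ring

/-- Worpitzky's identity: `z^k = ∑_{i=0}^{k-1} A(k,i) * C(z+i, k)`. -/
theorem worpitzky (k : ℕ) (hk : 0 < k) (z : ℕ) :
    z ^ k = ∑ i ∈ Finset.range k, eulerian k i * Nat.choose (z + i) k := by
  have h := worpitzkyZ k hk z
  exact_mod_cast h
end

section
/- For all positive integers m and n, A(m+n-1, m-1) = sum over d dividing m+n of (sum over c dividing (m+n)/d of mu(c) * A_{cd}(m+n-1, m-1)), where mu is the Möbius function and A_d denotes the generalized Eulerian numbers. -/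
/-- Generalized Eulerian numbers `A_d(k, l)`. -/
def genEulerian (d : ℕ) : ℕ → ℤ → ℤ
  | k, l =>
    if _h : k < d then
      (if 0 ≤ l ∧ l ≤ (k : ℤ) ∧ Int.gcd (l + 1) d = 1 then 1 else 0)
    else if _h0 : d = 0 then 0
    else (l + 1) * genEulerian d (k - d) l + ((k : ℤ) - l) * genEulerian d (k - d) (l - d)
  termination_by k _ => k
  decreasing_by all_goals omega

theorem eulerian_eq_zero_of_lt {k l : ℕ} (h : k < l) : eulerian k l = 0 := by
  induction k generalizing l with
  | zero => obtain ⟨l, rfl⟩ := Nat.exists_eq_add_one_of_ne_zero (by omega : l ≠ 0); rfl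
  | succ k ih =>
    obtain ⟨l, rfl⟩ := Nat.exists_eq_add_one_of_ne_zero (by omega : l ≠ 0)
    rw [eulerian, ih (by omega), ih (by omega), mul_zero, mul_zero, add_zero]

theorem genEulerian_of_neg (d k : ℕ) {l : ℤ} (hl : l < 0) : genEulerian d k l = 0 := by
  induction k using Nat.strong_induction_on generalizing l with
  | _ k ih =>
    rw [genEulerian]
    split_ifs
    · omega
    · rfl
    · rfl
    · rw [ih _ (by omega) hl, ih _ (by omega) (by omega), mul_zero, mul_zero, add_zero]

theorem genEulerian_one_succ (k : ℕ) (l : ℤ) :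
    genEulerian 1 (k + 1) l =
      (l + 1) * genEulerian 1 k l + (k + 1 - l) * genEulerian 1 k (l - 1) := by
  rw [genEulerian, dif_neg (by omega), dif_neg one_ne_zero]
  push_cast
  rfl

theorem genEulerian_one_natCast (k l : ℕ) : genEulerian 1 k l = eulerian k l := by
  induction k generalizing l with
  | zero => cases l <;> simp [genEulerian, eulerian]
  | succ k ih =>
    rw [genEulerian_one_succ]
    cases l with
    | zero => simpa [genEulerian_of_neg, eulerian] using ih 0
    | succ j =>
      rw [eulerian, Nat.cast_add_one, add_sub_cancel_right, ← Nat.cast_add_one, ih, ih]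
      -- for `k < j` the truncated `k - j` in `eulerian` is wrong, but it multiplies `eulerian k j = 0`
      rcases le_or_gt j k with hjk | hkj
      · push_cast [Nat.cast_sub hjk]; ring
      · rw [eulerian_eq_zero_of_lt hkj]; push_cast; ring

theorem Nat.div_div_div_eq_mul {N d c : ℕ} (hN : N ≠ 0) (hd : d ∣ N) (hc : c ∣ N / d) :
    N / (N / d / c) = c * d := by
  have hcd : c * d ∣ N := by simpa [Nat.mul_comm] using Nat.mul_dvd_of_dvd_div hd hc
  rw [Nat.div_div_eq_div_mul, Nat.mul_comm d, Nat.div_div_self hcd hN]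

open ArithmeticFunction in
theorem sum_divisors_sum_divisors_div_moebius_smul {R : Type*} [AddCommGroup R] {N : ℕ}
    (hN : N ≠ 0) (f : ℕ → R) :
    ∑ d ∈ N.divisors, ∑ c ∈ (N / d).divisors, moebius c • f (c * d) = f 1 := by
  -- with `g k = f (N / k)`, the inner sum is the Dirichlet convolution `(μ * g) (N / d)`
  have inversion := (sum_eq_iff_sum_smul_moebius_eq (g := fun k => f (N / k))).mpr
    (fun _ _ => rfl) N (Nat.pos_of_ne_zero hN)
  rw [Nat.div_self (Nat.pos_of_ne_zero hN), ← Nat.sum_div_divisors] at inversion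
  rw [← inversion]
  refine Finset.sum_congr rfl fun d hd => ?_
  rw [Nat.sum_divisorsAntidiagonal (fun c k => moebius c • f (N / k))]
  refine Finset.sum_congr rfl fun c hc => ?_
  rw [Nat.div_div_div_eq_mul hN (Nat.dvd_of_mem_divisors hd) (Nat.dvd_of_mem_divisors hc)]

open ArithmeticFunction in
theorem eulerian_moebius_decomposition_general (m n : ℕ) (hm : 0 < m) :
    (eulerian (m + n - 1) (m - 1) : ℤ) =
      ∑ d ∈ (m + n).divisors, ∑ c ∈ ((m + n) / d).divisors,
        (moebius c : ℤ) * genEulerian (c * d) (m + n - 1) ((m : ℤ) - 1) := by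
  have collapse := sum_divisors_sum_divisors_div_moebius_smul (N := m + n) (by omega)
    (fun e => genEulerian e (m + n - 1) ((m : ℤ) - 1))
  simp only [smul_eq_mul] at collapse
  rw [collapse, show (m : ℤ) - 1 = ((m - 1 : ℕ) : ℤ) by omega, genEulerian_one_natCast]

open ArithmeticFunction in
/-- Möbius-inversion decomposition of the Eulerian number:
`A(m+n-1, m-1) = ∑_{d ∣ m+n} ∑_{c ∣ (m+n)/d} μ(c) A_{cd}(m+n-1, m-1)`. -/
theorem eulerian_moebius_decomposition (m n : ℕ) (hm : 0 < m) (hn : 0 < n) :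
    (eulerian (m + n - 1) (m - 1) : ℤ) =
      ∑ d ∈ (m + n).divisors, ∑ c ∈ ((m + n) / d).divisors,
        (moebius c : ℤ) * genEulerian (c * d) (m + n - 1) ((m : ℤ) - 1) :=
  eulerian_moebius_decomposition_general m n hm
end

section
/- Let m, n >= 1 with m+n > 2, and let R = Q[D_{-m}, ..., D_n]/(M + L) as above, with M = (D_{-m}...D_{-1}, D_0 D_1 ... D_n) and L generated by i*D_{-m} - (i+1)*D_{-m+1} + D_{-m+i+1} for 1 <= i <= m+n-1. For 1 <= i <= m and 0 <= j <= n define D_{(-i,j)} = D_{-i+1} ... D_{-1} * D_0 ... D_{j-1} (empty product = 1). Then for every 1 <= k <= m+n-1, k! * D_0^k = sum over i from 1 to k of A(k, i-1) * D_{(-i, k-i+1)} in R, where D_{(-i,j)} is interpreted as 0 when i > m or j > n. -/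
/-!
Modulo the linear relations, the classes `D_{-m}, …, D_n` form an arithmetic progression with
difference `D_1 - D_0`. Substituting `z = D_0`, `y = D_1 - D_0` into the homogenized Worpitzky
identity `k! z^k = ∑_l A(k, l) ∏_{j<k} (z + (j - l) y)` turns the `l`-th product into
`D_{-l} ⋯ D_{k-l-1}`. This is `D_{(-(l+1), k-l)}` when `l < m` and `k - l ≤ n`; otherwise it
contains all of `D_{-m} ⋯ D_{-1}` or all of `D_0 ⋯ D_n`, and vanishes by the monomial relations.
-/

open MvPolynomial
open Fin.NatCast

/-- The defining ideal `M + L` of the rational Chow ring of `X(m, n)`: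
the variable `X k` represents the divisor class `D_{k-m}`. -/
noncomputable def chowIdeal (m n : ℕ) : Ideal (MvPolynomial (Fin (m + n + 1)) ℚ) :=
  Ideal.span
    ({∏ k ∈ Finset.univ.filter (fun k : Fin (m + n + 1) => (k : ℕ) < m), X k,
      ∏ k ∈ Finset.univ.filter (fun k : Fin (m + n + 1) => m ≤ (k : ℕ)), X k} ∪
     { q | ∃ i : ℕ, 1 ≤ i ∧ i ≤ m + n - 1 ∧
        q = C (i : ℚ) * X ((0 : ℕ) : Fin (m + n + 1))
            - C ((i : ℚ) + 1) * X ((1 : ℕ) : Fin (m + n + 1))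
            + X ((i + 1 : ℕ) : Fin (m + n + 1)) })

/-- `D_{(-i,j)} = D_{-i+1} ⋯ D_{-1} · D_0 ⋯ D_{j-1}`, i.e. the product of the
variables `X t` for `m + 1 - i ≤ t ≤ m + j - 1`, interpreted as `0` when
`i > m` or `j > n`. -/
noncomputable def Dij (m n i j : ℕ) : MvPolynomial (Fin (m + n + 1)) ℚ :=
  if m < i ∨ n < j then 0
  else ∏ t ∈ Finset.Ico (m + 1 - i) (m + j), X ((t : ℕ) : Fin (m + n + 1))

open Finset

theorem eulerian_eq_zero_of_le {n k : ℕ} (hn : 1 ≤ n) (hnk : n ≤ k) : eulerian n k = 0 := by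
  induction n generalizing k with
  | zero => omega
  | succ n ih =>
    obtain ⟨k, rfl⟩ : ∃ j, k = j + 1 := ⟨k - 1, by omega⟩
    rcases Nat.eq_zero_or_pos n with rfl | hn'
    · simp [eulerian]
    · simp [eulerian, ih hn' (by omega : n ≤ k + 1), Nat.sub_eq_zero_of_le (by omega : n ≤ k)]

section Worpitzky

variable {R : Type*} [CommRing R]

/-- For `y = 1` this is `k! * (z - l + k - 1).choose k`. -/
def worpitzkyProd (z y : R) (k l : ℕ) : R :=
  ∏ j ∈ range k, (z + ((j - l : ℤ) : R) * y)

theorem worpitzkyProd_succ (z y : R) (k l : ℕ) :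
    worpitzkyProd z y (k + 1) l = worpitzkyProd z y k l * (z + ((k - l : ℤ) : R) * y) :=
  prod_range_succ _ k

theorem worpitzkyProd_succ_succ (z y : R) (k l : ℕ) :
    worpitzkyProd z y (k + 1) (l + 1) = (z - ((l + 1 : ℕ) : R) * y) * worpitzkyProd z y k l := by
  rw [worpitzkyProd, prod_range_succ', mul_comm, worpitzkyProd]
  congr 1
  · push_cast; ring
  · exact prod_congr rfl fun j _ => by push_cast; ring

theorem succ_mul_worpitzkyProd (z y : R) (k l : ℕ) :
    ((k + 1 : ℕ) : R) * z * worpitzkyProd z y k l =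
      ((l + 1 : ℕ) : R) * worpitzkyProd z y (k + 1) l
        + ((k - l : ℤ) : R) * worpitzkyProd z y (k + 1) (l + 1) := by
  rw [worpitzkyProd_succ, worpitzkyProd_succ_succ]
  push_cast
  ring

theorem factorial_mul_pow_eq_sum_eulerian (z y : R) {k : ℕ} (hk : 1 ≤ k) :
    (k.factorial : R) * z ^ k = ∑ l ∈ range k, (eulerian k l : R) * worpitzkyProd z y k l := by
  induction k, hk using Nat.le_induction with
  | base => simp [eulerian, worpitzkyProd]
  | succ k hk ih =>
    set W := worpitzkyProd z y (k + 1)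
    set A := fun l => (eulerian k l : R)
    have hAk : A k = 0 := by simp [A, eulerian_eq_zero_of_le hk le_rfl]
    have expand : ((k + 1).factorial : R) * z ^ (k + 1) =
        (∑ l ∈ range k, ((l + 1 : ℕ) : R) * A l * W l)
          + ∑ l ∈ range k, ((k - l : ℤ) : R) * A l * W (l + 1) := by
      rw [show ((k + 1).factorial : R) * z ^ (k + 1) =
          ((k + 1 : ℕ) : R) * z * (k.factorial * z ^ k) by push_cast [Nat.factorial_succ]; ring,
        ih, mul_sum, ← sum_add_distrib]
      refine sum_congr rfl fun l _ => ?_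
      linear_combination A l * succ_mul_worpitzkyProd z y k l
    have shift : ∑ l ∈ range k, ((l + 1 : ℕ) : R) * A l * W l =
        (∑ l ∈ range k, ((l + 1 + 1 : ℕ) : R) * A (l + 1) * W (l + 1)) + A 0 * W 0 := by
      have := sum_range_succ' (fun l => ((l + 1 : ℕ) : R) * A l * W l) k
      rwa [sum_range_succ, hAk, mul_zero, zero_mul, add_zero, zero_add, Nat.cast_one,
        one_mul] at this
    rw [expand, shift, sum_range_succ' _ k]
    simp only [eulerian]
    rw [add_right_comm, ← sum_add_distrib]
    congr 1
    refine sum_congr rfl fun l hl => ?_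
    push_cast [A, Nat.cast_sub (mem_range.mp hl).le]
    ring

end Worpitzky

theorem Fin.prod_univ_filter_eq_prod_range_filter {M : Type*} [CommMonoid M] {N : ℕ} [NeZero N]
    (g : Fin N → M) (p : ℕ → Prop) [DecidablePred p] :
    ∏ k ∈ univ.filter (fun k : Fin N => p k), g k = ∏ i ∈ (range N).filter p, g i := by
  rw [prod_filter, prod_filter, ← Fin.prod_univ_eq_prod_range (fun i => if p i then g i else 1)]
  simp only [Fin.cast_val_eq_self]

theorem prod_range_eq_zero_of_window {M : Type*} [CommMonoidWithZero M] {f : ℕ → M}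
    {a w k : ℕ} (h : a + w ≤ k) (hf : ∏ i ∈ range w, f (a + i) = 0) :
    ∏ j ∈ range k, f j = 0 := by
  have hIco : ∏ j ∈ Ico a (a + w), f j = 0 := by
    rwa [prod_Ico_eq_prod_range, Nat.add_sub_cancel_left]
  exact zero_dvd_iff.mp (hIco ▸ prod_dvd_prod_of_subset _ _ f fun j hj => by
    simp only [mem_Ico, mem_range] at hj ⊢; omega)

abbrev ChowRing (m n : ℕ) := MvPolynomial (Fin (m + n + 1)) ℚ ⧸ chowIdeal m n

namespace ChowRing

variable {m n : ℕ}

noncomputable def divisor (m n t : ℕ) : ChowRing m n :=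
  Ideal.Quotient.mk (chowIdeal m n) (X (t : Fin (m + n + 1)))

theorem divisor_eq_add_mul {t : ℕ} (ht : t ≤ m + n) :
    divisor m n t = divisor m n 0 + (t : ChowRing m n) * (divisor m n 1 - divisor m n 0) := by
  obtain rfl | rfl | ⟨i, rfl⟩ : t = 0 ∨ t = 1 ∨ ∃ i, t = i + 1 + 1 := by
    rcases t with _ | _ | i <;> simp
  · simp
  · simp
  have hrel : C ((i + 1 : ℕ) : ℚ) * X ((0 : ℕ) : Fin (m + n + 1))
      - C (((i + 1 : ℕ) : ℚ) + 1) * X ((1 : ℕ) : Fin (m + n + 1))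
      + X ((i + 1 + 1 : ℕ) : Fin (m + n + 1)) ∈ chowIdeal m n :=
    Ideal.subset_span (Or.inr ⟨i + 1, by omega, by omega, rfl⟩)
  have := Ideal.Quotient.eq_zero_iff_mem.mpr hrel
  simp only [map_add, map_sub, map_mul, Ideal.Quotient.mk_algebraMap, ← algebraMap_eq] at this
  simp only [divisor]
  push_cast at this ⊢
  linear_combination this

theorem prod_divisor_range : ∏ i ∈ range m, divisor m n i = 0 := by
  have hgen :
      ∏ k ∈ univ.filter (fun k : Fin (m + n + 1) => (k : ℕ) < m), X k ∈ chowIdeal m n :=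
    Ideal.subset_span (Or.inl (Set.mem_insert _ _))
  rw [Fin.prod_univ_filter_eq_prod_range_filter X (· < m),
    show (range (m + n + 1)).filter (· < m) = range m by ext; simp; omega] at hgen
  simpa [divisor, ← map_prod] using Ideal.Quotient.eq_zero_iff_mem.mpr hgen

theorem prod_divisor_add_range : ∏ i ∈ range (n + 1), divisor m n (m + i) = 0 := by
  have hgen :
      ∏ k ∈ univ.filter (fun k : Fin (m + n + 1) => m ≤ (k : ℕ)), X k ∈ chowIdeal m n :=
    Ideal.subset_span (Or.inl (Set.mem_insert_of_mem _ rfl))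
  rw [Fin.prod_univ_filter_eq_prod_range_filter X (m ≤ ·),
    show (range (m + n + 1)).filter (m ≤ ·) = Ico m (m + (n + 1)) by ext; simp; omega,
    prod_Ico_eq_prod_range, Nat.add_sub_cancel_left] at hgen
  simpa [divisor, ← map_prod] using Ideal.Quotient.eq_zero_iff_mem.mpr hgen

theorem divisor_add_mul_eq_divisor {s t : ℕ} (hs : s ≤ m + n) (ht : t ≤ m + n) (c : ℤ)
    (h : (s : ℤ) + c = t) :
    divisor m n s + (c : ChowRing m n) * (divisor m n 1 - divisor m n 0) = divisor m n t := by
  rw [divisor_eq_add_mul hs, divisor_eq_add_mul ht, ← Int.cast_natCast t, ← h]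
  push_cast
  ring

theorem worpitzkyProd_divisor {k l : ℕ} (hl : l < k) :
    worpitzkyProd (divisor m n m) (divisor m n 1 - divisor m n 0) k l =
      Ideal.Quotient.mk (chowIdeal m n) (Dij m n (l + 1) (k - l)) := by
  unfold worpitzkyProd Dij
  split_ifs with hD
  · rw [map_zero]
    rcases hD with hml | hnk
    · refine prod_range_eq_zero_of_window (a := l - m) (w := m) (by omega) ?_
      rw [← prod_divisor_range (n := n)]
      exact prod_congr rfl fun i hi => by
        simp only [mem_range] at hi
        exact divisor_add_mul_eq_divisor (by omega) (by omega) _ (by omega)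
    · refine prod_range_eq_zero_of_window (a := l) (w := n + 1) (by omega) ?_
      rw [← prod_divisor_add_range]
      exact prod_congr rfl fun i hi => by
        simp only [mem_range] at hi
        exact divisor_add_mul_eq_divisor (by omega) (by omega) _ (by omega)
  · rw [map_prod, prod_Ico_eq_prod_range, show m + (k - l) - (m + 1 - (l + 1)) = k by omega]
    exact prod_congr rfl fun j hj => by
      simp only [mem_range] at hj
      exact divisor_add_mul_eq_divisor (by omega) (by omega) _ (by omega)

end ChowRing

theorem chow_eulerian_expansion_general (m n : ℕ) (k : ℕ) (hk : 1 ≤ k) :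
    Ideal.Quotient.mk (chowIdeal m n)
        (C (k.factorial : ℚ) * X ((m : ℕ) : Fin (m + n + 1)) ^ k) =
      Ideal.Quotient.mk (chowIdeal m n)
        (∑ i ∈ Finset.Icc 1 k, C (eulerian k (i - 1) : ℚ) * Dij m n i (k - i + 1)) := by
  have reindex : ∑ i ∈ Icc 1 k, C (eulerian k (i - 1) : ℚ) * Dij m n i (k - i + 1) =
      ∑ l ∈ range k, C (eulerian k l : ℚ) * Dij m n (l + 1) (k - l) := by
    rw [← Ico_add_one_right_eq_Icc, sum_Ico_eq_sum_range, Nat.add_sub_cancel]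
    refine sum_congr rfl fun l hl => ?_
    rw [add_comm 1 l, Nat.add_sub_cancel, show k - (l + 1) + 1 = k - l by simp at hl; omega]
  calc _ = (k.factorial : ChowRing m n) * ChowRing.divisor m n m ^ k := by
        simp only [map_mul, map_pow, map_natCast]; rfl
    _ = ∑ l ∈ range k, (eulerian k l : ChowRing m n) *
          worpitzkyProd (ChowRing.divisor m n m)
            (ChowRing.divisor m n 1 - ChowRing.divisor m n 0) k l :=
        factorial_mul_pow_eq_sum_eulerian _ _ hk
    _ = _ := by
      rw [reindex, map_sum]
      refine sum_congr rfl fun l hl => ?_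
      rw [ChowRing.worpitzkyProd_divisor (mem_range.mp hl), map_mul, map_natCast, map_natCast]

/-- Lemma 2.1: in the Chow ring, for `1 ≤ k ≤ m + n - 1`,
`k! · D_0^k = ∑_{i=1}^{k} A(k, i-1) · D_{(-i, k-i+1)}`. -/
theorem chow_eulerian_expansion (m n : ℕ) (hm : 1 ≤ m) (hn : 1 ≤ n)
    (hmn : 2 < m + n) (k : ℕ) (hk : 1 ≤ k) (hk' : k ≤ m + n - 1) :
    Ideal.Quotient.mk (chowIdeal m n)
        (C (k.factorial : ℚ) * X ((m : ℕ) : Fin (m + n + 1)) ^ k) =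
      Ideal.Quotient.mk (chowIdeal m n)
        (∑ i ∈ Finset.Icc 1 k, C (eulerian k (i - 1) : ℚ) * Dij m n i (k - i + 1)) :=
  chow_eulerian_expansion_general m n k hk
end

section
/- In the ring R = Q[D_{-m}, ..., D_n]/(M + L) defined above, the product (m+n-1)! * D_0^{m+n-1} equals A(m+n-1, m-1) * D_{-m+1} D_{-m+2} ... D_{-1} D_0 D_1 ... D_{n-1}. -/
/-! The linear relations put all classes on a line: `D_{t-m} = a + t u` with `a = D_{-m}` and
`u = D_{-m+1} - D_{-m}`. Worpitzky's identity `N! y^N = ∑_k A(N,k) ∏_{j<N} (y + (j-k) u)` at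
`y = D_0`, `N = m+n-1`, writes `N! D_0^N` as a combination of the products
`D_{-k} D_{-k+1} ⋯ D_{N-1-k}` of `N` consecutive classes. For `k ≠ m-1` such a window contains
all of `D_{-m}, …, D_{-1}` or all of `D_0, …, D_n`, so the monomial relations kill it; the term
`k = m-1` is the right-hand side. -/

open MvPolynomial
open Fin.NatCast

open Finset
open scoped Nat

lemma eulerian_eq_zero_of_lt_s15 : ∀ {n k : ℕ}, n < k → eulerian n k = 0
  | 0, _ + 1, _ => rfl
  | n + 1, k + 1, h => by
    rw [eulerian, eulerian_eq_zero_of_lt_s15 (by omega : n < k + 1), Nat.sub_eq_zero_of_le (by omega)]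
    simp

section Eulerian

variable {R : Type*} [CommRing R]

lemma cast_eulerian_succ_succ (n k : ℕ) :
    (eulerian (n + 1) (k + 1) : R) =
      (k + 2) * eulerian n (k + 1) + ((n : R) - k) * eulerian n k := by
  rw [eulerian]
  rcases le_or_gt k n with h | h
  · push_cast [Nat.cast_sub h]
    ring
  · simp [eulerian_eq_zero_of_lt_s15 h, eulerian_eq_zero_of_lt_s15 (h.trans (lt_add_one k))]

lemma sum_range_eulerian_succ_mul (n : ℕ) (P : ℕ → R) :
    ∑ k ∈ range (n + 2), (eulerian (n + 1) k : R) * P k =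
      ∑ k ∈ range (n + 1), (eulerian n k : R) * ((k + 1) * P k + ((n : R) - k) * P (k + 1)) := by
  calc ∑ k ∈ range (n + 2), (eulerian (n + 1) k : R) * P k
      = ∑ k ∈ range (n + 1), (((k + 1 : ℕ) : R) + 1) * eulerian n (k + 1) * P (k + 1) +
          eulerian n 0 * P 0 + ∑ k ∈ range (n + 1), ((n : R) - k) * eulerian n k * P (k + 1) := by
        rw [sum_range_succ', add_right_comm, ← sum_add_distrib]
        congr 1
        · exact sum_congr rfl fun k _ => by rw [cast_eulerian_succ_succ]; push_cast; ring
    _ = ∑ k ∈ range (n + 2), ((k : R) + 1) * eulerian n k * P k +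
          ∑ k ∈ range (n + 1), ((n : R) - k) * eulerian n k * P (k + 1) := by
        rw [sum_range_succ' _ (n + 1)]
        simp
    _ = _ := by
        rw [sum_range_succ, eulerian_eq_zero_of_lt_s15 (lt_add_one n), Nat.cast_zero, mul_zero,
          zero_mul, add_zero, ← sum_add_distrib]
        exact sum_congr rfl fun k _ => by ring

/-- Worpitzky's identity `x ^ n = ∑ k, A(n, k) * (x + k).choose n`, made homogeneous, using the
symmetry `A(n, k) = A(n, n - 1 - k)`. -/
theorem factorial_mul_pow_eq_sum_eulerian_mul_prod (y u : R) (n : ℕ) :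
    (n ! : R) * y ^ n =
      ∑ k ∈ range (n + 1), (eulerian n k : R) * ∏ j ∈ range n, (y + ((j : R) - k) * u) := by
  induction n with
  | zero => simp [eulerian]
  | succ n ih =>
    set P : ℕ → R := fun k => ∏ j ∈ range (n + 1), (y + ((j : R) - k) * u)
    have hstep (k : ℕ) : ((n : R) + 1) * y * ∏ j ∈ range n, (y + ((j : R) - k) * u) =
        (k + 1) * P k + ((n : R) - k) * P (k + 1) := by
      have hshift : ∏ j ∈ range n, (y + (((j + 1 : ℕ) : R) - ((k + 1 : ℕ) : R)) * u) =
          ∏ j ∈ range n, (y + ((j : R) - k) * u) :=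
        prod_congr rfl fun j _ => by push_cast; ring
      simp only [P]
      rw [prod_range_succ, prod_range_succ', hshift]
      push_cast
      ring
    calc ((n + 1)! : R) * y ^ (n + 1) = ((n : R) + 1) * y * ((n ! : R) * y ^ n) := by
          push_cast [Nat.factorial_succ]
          ring
      _ = ∑ k ∈ range (n + 1),
            (eulerian n k : R) * ((k + 1) * P k + ((n : R) - k) * P (k + 1)) := by
          rw [ih, mul_sum]
          exact sum_congr rfl fun k _ => by rw [← hstep]; ring
      _ = _ := (sum_range_eulerian_succ_mul n P).symm

lemma prod_range_add_dvd_prod_range_add {M : Type*} [CommMonoid M] (f : ℤ → M) {s t : ℤ}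
    {l l' : ℕ} (hts : t ≤ s) (hl : s + l ≤ t + l') :
    ∏ i ∈ range l, f (s + i) ∣ ∏ i ∈ range l', f (t + i) := by
  have hIco (a : ℤ) (k : ℕ) : ∏ i ∈ range k, f (a + i) = ∏ c ∈ Ico a (a + k), f c := by
    rw [Int.Ico_eq_finset_map, prod_map]
    simp
  rw [hIco, hIco]
  exact prod_dvd_prod_of_subset _ _ _ (Ico_subset_Ico hts hl)

theorem factorial_mul_pow_eq_eulerian_mul_prod_Icc (a u : R) {m n : ℕ} (hm : 1 ≤ m)
    (h₁ : ∏ i ∈ range m, (a + i * u) = 0) (h₂ : ∏ i ∈ Icc m (m + n), (a + i * u) = 0) :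
    ((m + n - 1)! : R) * (a + m * u) ^ (m + n - 1) =
      eulerian (m + n - 1) (m - 1) * ∏ i ∈ Icc 1 (m + n - 1), (a + i * u) := by
  set f : ℤ → R := fun c => a + c * u
  have hIcc (p q : ℕ) : ∏ i ∈ Icc p q, (a + i * u) = ∏ i ∈ range (q + 1 - p), f (p + i) := by
    rw [← Ico_add_one_right_eq_Icc, prod_Ico_eq_prod_range]
    simp [f]
  have hwindow (k : ℕ) : ∏ j ∈ range (m + n - 1), (a + m * u + ((j : R) - k) * u) =
      ∏ j ∈ range (m + n - 1), f ((m - k : ℤ) + j) :=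
    prod_congr rfl fun j _ => by simp only [f]; push_cast; ring
  have hf₁ : ∏ i ∈ range m, f (0 + i) = 0 := by simpa [f] using h₁
  have hf₂ : ∏ i ∈ range (n + 1), f (m + i) = 0 := by
    rw [← h₂, hIcc, show m + n + 1 - m = n + 1 by omega]
  rw [factorial_mul_pow_eq_sum_eulerian_mul_prod, sum_eq_single (m - 1)]
  · rw [hwindow, hIcc, Nat.add_sub_cancel]
    congr 1
    exact prod_congr rfl fun j _ => by congr 2; omega
  · intro k hk hne
    rw [mem_range] at hk
    rw [hwindow]
    refine mul_eq_zero_of_right _ (zero_dvd_iff.mp ?_)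
    -- the window `[m - k, 2m + n - 1 - k)` contains `[m, m + n]` if `k < m - 1`,
    -- and `[0, m)` if `m ≤ k`
    rcases lt_or_ge k (m - 1) with hk' | hk'
    · exact hf₂ ▸ prod_range_add_dvd_prod_range_add f (by omega) (by omega)
    · exact hf₁ ▸ prod_range_add_dvd_prod_range_add f (by omega) (by omega)
  · intro h
    exact absurd (mem_range.mpr (by omega)) h

end Eulerian

noncomputable def chowClass (m n j : ℕ) : MvPolynomial (Fin (m + n + 1)) ℚ ⧸ chowIdeal m n :=
  Ideal.Quotient.mk (chowIdeal m n) (X (j : Fin (m + n + 1)))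

section ChowRing

variable {m n : ℕ}

lemma chowClass_eq_add_mul {j : ℕ} (hj : j ≤ m + n) :
    chowClass m n j = chowClass m n 0 + j * (chowClass m n 1 - chowClass m n 0) := by
  match j, hj with
  | 0, _ => simp
  | 1, _ => simp
  | i + 2, hi =>
    have hrel : C ((i + 1 : ℕ) : ℚ) * X ((0 : ℕ) : Fin (m + n + 1))
        - C (((i + 1 : ℕ) : ℚ) + 1) * X ((1 : ℕ) : Fin (m + n + 1))
        + X ((i + 1 + 1 : ℕ) : Fin (m + n + 1)) ∈ chowIdeal m n :=
      Ideal.subset_span (Or.inr ⟨i + 1, by omega, by omega, rfl⟩)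
    have h := Ideal.Quotient.eq_zero_iff_mem.mpr hrel
    rw [show ((i + 1 : ℕ) : ℚ) + 1 = ((i + 2 : ℕ) : ℚ) by push_cast; ring] at h
    simp only [map_add, map_sub, map_mul, map_natCast] at h
    change _ * chowClass m n 0 - _ * chowClass m n 1 + chowClass m n (i + 2) = 0 at h
    push_cast at h ⊢
    linear_combination h

lemma mk_prod_filter_X (p : ℕ → Prop) [DecidablePred p] :
    Ideal.Quotient.mk (chowIdeal m n)
        (∏ k ∈ univ.filter (fun k : Fin (m + n + 1) => p k), X k) =
      ∏ i ∈ (range (m + n + 1)).filter p, chowClass m n i := by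
  rw [map_prod, prod_filter, prod_filter, ← Fin.prod_univ_eq_prod_range]
  simp [chowClass]

lemma prod_range_chowClass : ∏ i ∈ range m, chowClass m n i = 0 := by
  have h : ∏ k ∈ univ.filter (fun k : Fin (m + n + 1) => (k : ℕ) < m), X k ∈ chowIdeal m n :=
    Ideal.subset_span (Or.inl (Set.mem_insert _ _))
  rw [← Ideal.Quotient.eq_zero_iff_mem, mk_prod_filter_X (· < m)] at h
  rwa [show (range (m + n + 1)).filter (· < m) = range m by ext; simp; omega] at h

lemma prod_Icc_chowClass : ∏ i ∈ Icc m (m + n), chowClass m n i = 0 := by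
  have h : ∏ k ∈ univ.filter (fun k : Fin (m + n + 1) => m ≤ (k : ℕ)), X k ∈ chowIdeal m n :=
    Ideal.subset_span (Or.inl (Set.mem_insert_of_mem _ rfl))
  rw [← Ideal.Quotient.eq_zero_iff_mem, mk_prod_filter_X (m ≤ ·)] at h
  rwa [show (range (m + n + 1)).filter (m ≤ ·) = Icc m (m + n) by ext; simp; omega] at h

end ChowRing

theorem chow_top_degree_general (m n : ℕ) (hm : 1 ≤ m) :
    Ideal.Quotient.mk (chowIdeal m n)
        (C ((m + n - 1).factorial : ℚ) * X ((m : ℕ) : Fin (m + n + 1)) ^ (m + n - 1)) =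
      Ideal.Quotient.mk (chowIdeal m n)
        (C (eulerian (m + n - 1) (m - 1) : ℚ) *
          ∏ t ∈ Finset.Icc 1 (m + n - 1), X ((t : ℕ) : Fin (m + n + 1))) := by
  have hprod (s : Finset ℕ) (hs : ∀ i ∈ s, i ≤ m + n) : ∏ i ∈ s, chowClass m n i =
      ∏ i ∈ s, (chowClass m n 0 + i * (chowClass m n 1 - chowClass m n 0)) :=
    prod_congr rfl fun i hi => chowClass_eq_add_mul (hs i hi)
  have h₁ := prod_range_chowClass (m := m) (n := n)
  have h₂ := prod_Icc_chowClass (m := m) (n := n)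
  rw [hprod _ (fun i hi => by simp only [mem_range, mem_Icc] at hi; omega)] at h₁ h₂
  simp only [map_mul, map_pow, map_prod, map_natCast]
  change _ * chowClass m n m ^ _ = _ * ∏ t ∈ Icc 1 (m + n - 1), chowClass m n t
  rw [hprod _ (fun i hi => by simp only [mem_Icc] at hi; omega), chowClass_eq_add_mul (by omega)]
  exact factorial_mul_pow_eq_eulerian_mul_prod_Icc _ _ hm h₁ h₂

/-- Key computation of Proposition 2.2: in the Chow ring of `X(m, n)`,
`(m+n-1)! · D_0^{m+n-1} = A(m+n-1, m-1) · D_{-m+1} ⋯ D_{-1} D_0 ⋯ D_{n-1}`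
(the variable `X t` represents `D_{t-m}`). -/
theorem chow_top_degree (m n : ℕ) (hm : 1 ≤ m) (hn : 1 ≤ n) (hmn : 2 < m + n) :
    Ideal.Quotient.mk (chowIdeal m n)
        (C ((m + n - 1).factorial : ℚ) * X ((m : ℕ) : Fin (m + n + 1)) ^ (m + n - 1)) =
      Ideal.Quotient.mk (chowIdeal m n)
        (C (eulerian (m + n - 1) (m - 1) : ℚ) *
          ∏ t ∈ Finset.Icc 1 (m + n - 1), X ((t : ℕ) : Fin (m + n + 1))) :=
  chow_top_degree_general m n hm
end

section
/- Let m, n be positive integers, d a divisor of m+n, and suppose E_+ is a subset of {0, d, 2d, ...} ∩ [0, n] containing n, E_- a subset of {d, 2d, ...} ∩ [1, m] containing m (support sets in the paper's notation, after relabeling). Define P = { i + j : i in E_+, j in E_-, i + j <= m + n - d }. Then |E_+| + |E_-| - 2 <= |P|. -/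
open Finset Pointwise

/-!
By Cauchy–Davenport the full sumset `E₊ + E₋` has at least `|E₊| + |E₋| - 1` elements. All of
them are multiples of `d` not exceeding `m + n`, itself a multiple of `d`, so the truncation at
`m + n - d` removes at most the single element `m + n`.
-/

theorem Nat.eq_of_dvd_of_sub_lt {d s N : ℕ} (hdN : d ∣ N) (hds : d ∣ s) (hsN : s ≤ N)
    (hlt : N - d < s) : s = N := by
  have : N - s = 0 := Nat.eq_zero_of_dvd_of_lt (Nat.dvd_sub hdN hds) (by omega)
  omega

theorem Finset.card_le_card_filter_add_one {α : Type*} {s : Finset α} {p : α → Prop}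
    [DecidablePred p] {a : α} (h : ∀ x ∈ s, ¬p x → x = a) :
    #s ≤ #(s.filter p) + 1 := by
  rw [← card_filter_add_card_filter_not p]
  gcongr
  exact card_le_one.2 fun x hx y hy => by
    rw [mem_filter] at hx hy
    rw [h x hx.1 hx.2, h y hy.1 hy.2]

theorem sumset_lower_bound_general (m n d : ℕ)
    (hdvd : d ∣ m + n) (Ep Em : Finset ℕ)
    (hEp : ∀ x ∈ Ep, x ≤ n ∧ d ∣ x) (hnEp : n ∈ Ep)
    (hEm : ∀ x ∈ Em, 1 ≤ x ∧ x ≤ m ∧ d ∣ x) (hmEm : m ∈ Em) :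
    Ep.card + Em.card ≤
      (((Ep ×ˢ Em).image fun p => p.1 + p.2).filter fun s => s ≤ m + n - d).card + 2 := by
  rw [← add_def]
  have cauchy_davenport : #Ep + #Em - 1 ≤ #(Ep + Em) :=
    cauchy_davenport_add_of_linearOrder_isCancelAdd ⟨n, hnEp⟩ ⟨m, hmEm⟩
  have truncation : #(Ep + Em) ≤ #((Ep + Em).filter fun s => s ≤ m + n - d) + 1 := by
    refine card_le_card_filter_add_one (a := m + n) fun s hs htrunc => ?_
    obtain ⟨i, hi, j, hj, rfl⟩ := mem_add.1 hs
    obtain ⟨hin, hdi⟩ := hEp i hi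
    obtain ⟨-, hjm, hdj⟩ := hEm j hj
    exact Nat.eq_of_dvd_of_sub_lt hdvd (hdi.add hdj) (by omega) (by omega)
  have := card_pos.2 ⟨n, hnEp⟩
  omega

/-- Combinatorial core of Lemma 3.2: for finite sets `E₊ ⊆ {0, ..., n}` and
`E₋ ⊆ {1, ..., m}` of multiples of `d` with `n ∈ E₊` and `m ∈ E₋`, the
truncated sumset `P = {i + j : i ∈ E₊, j ∈ E₋, i + j ≤ m + n - d}` satisfies
`|E₊| + |E₋| - 2 ≤ |P|`. -/
theorem sumset_lower_bound (m n d : ℕ) (hm : 0 < m) (hn : 0 < n) (hd : 0 < d)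
    (hdvd : d ∣ m + n) (Ep Em : Finset ℕ)
    (hEp : ∀ x ∈ Ep, x ≤ n ∧ d ∣ x) (hnEp : n ∈ Ep)
    (hEm : ∀ x ∈ Em, 1 ≤ x ∧ x ≤ m ∧ d ∣ x) (hmEm : m ∈ Em) :
    Ep.card + Em.card ≤
      (((Ep ×ˢ Em).image fun p => p.1 + p.2).filter fun s => s ≤ m + n - d).card + 2 :=
  sumset_lower_bound_general m n d hdvd Ep Em hEp hnEp hEm hmEm
end
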